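/- arXiv:1211.2030 — 3 statements merged into one kernel-verified Lean document; each statement's English description precedes it below -/
import Mathlib

section
/- Let P₁, P₂, Q₁, Q₂ : [0,1] → ℝ^d be continuous curves with P₁(1) = P₂(0) and Q₁(1) = Q₂(0), and let ε > 0. If δ_F(P₁, Q₁) ≤ ε and δ_F(P₂, Q₂) ≤ ε, then δ_F(P₁ + P₂, Q₁ + Q₂) ≤ ε, where P₁ + P₂ denotes the concatenation defined by (P₁ + P₂)(t) = P₁(2t) for t ∈ [0, 1/2] and (P₁ + P₂)(t) = P₂(2t − 1) for t ∈ [1/2, 1], and similarly for Q₁ + Q₂. -/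
open Set Metric

noncomputable section

/-- Euclidean space ℝ^d. -/
abbrev Euc (d : ℕ) := EuclideanSpace ℝ (Fin d)

/-- A pair of continuous nondecreasing surjections from `[0,1]` onto `[0,1]`. -/
def IsReparamPair (σ τ : ℝ → ℝ) : Prop :=
  ContinuousOn σ (Set.Icc 0 1) ∧ MonotoneOn σ (Set.Icc 0 1) ∧
    σ '' Set.Icc 0 1 = Set.Icc 0 1 ∧
  ContinuousOn τ (Set.Icc 0 1) ∧ MonotoneOn τ (Set.Icc 0 1) ∧
    τ '' Set.Icc 0 1 = Set.Icc 0 1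

/-- The Fréchet distance between two curves `[0,1] → ℝ^d`. -/
noncomputable def frechetDist {d : ℕ} (P Q : ℝ → Euc d) : ℝ :=
  sInf {r : ℝ | ∃ σ τ : ℝ → ℝ, IsReparamPair σ τ ∧
    r = ⨆ t : Set.Icc (0 : ℝ) 1, dist (P (σ t)) (Q (τ t))}

/-- The polygonal curve with vertices `q 0, …, q n` (so `n` segments),
linearly parametrizing the segment from `q j` to `q (j+1)` on `[j/n, (j+1)/n]`. -/
noncomputable def polyCurve {d : ℕ} (q : ℕ → Euc d) (n : ℕ) (t : ℝ) : Euc d :=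
  let j : ℕ := min (⌊t * n⌋.toNat) (n - 1)
  (1 - (t * n - j)) • q j + (t * n - j) • q (j + 1)

/-- The segment from `a` to `b` as a curve on `[0,1]`. -/
def segCurve {d : ℕ} (a b : Euc d) (t : ℝ) : Euc d := (1 - t) • a + t • b


/-- Concatenation of two curves on `[0,1]`: traverse `f` on `[0, 1/2]` and `g` on
`[1/2, 1]`, each at double speed. -/
noncomputable def concatCurve {d : ℕ} (f g : ℝ → Euc d) (t : ℝ) : Euc d :=
  if t ≤ 1 / 2 then f (2 * t) else g (2 * t - 1)

/-! ### Auxiliary material -/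

/-- Basic facts about a continuous monotone surjection of `[0,1]` onto itself. -/
lemma reparam_facts {σ : ℝ → ℝ} (hm : MonotoneOn σ (Set.Icc 0 1))
    (hi : σ '' Set.Icc 0 1 = Set.Icc 0 1) :
    σ 0 = 0 ∧ σ 1 = 1 ∧ ∀ t ∈ Set.Icc (0:ℝ) 1, σ t ∈ Set.Icc (0:ℝ) 1 := by
  have hmem : ∀ t ∈ Set.Icc (0:ℝ) 1, σ t ∈ Set.Icc (0:ℝ) 1 := by
    intro t ht
    rw [← hi]; exact ⟨t, ht, rfl⟩
  have h01 : (0:ℝ) ∈ Set.Icc (0:ℝ) 1 := ⟨le_refl 0, zero_le_one⟩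
  have h11 : (1:ℝ) ∈ Set.Icc (0:ℝ) 1 := ⟨zero_le_one, le_refl 1⟩
  have h0 : σ 0 = 0 := by
    obtain ⟨s, hs, hσs⟩ : (0:ℝ) ∈ σ '' Set.Icc 0 1 := by rw [hi]; exact h01
    have := hm h01 hs hs.1
    have := (hmem 0 h01).1
    linarith [this, hσs ▸ hm h01 hs hs.1]
  have h1 : σ 1 = 1 := by
    obtain ⟨s, hs, hσs⟩ : (1:ℝ) ∈ σ '' Set.Icc 0 1 := by rw [hi]; exact h11
    have := hm hs h11 hs.2
    have := (hmem 1 h11).2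
    linarith [this, hσs ▸ hm hs h11 hs.2]
  exact ⟨h0, h1, hmem⟩

/-- The combined reparametrization: run `σ₁` (rescaled) on `[0,1/2]` and `σ₂`
(rescaled) on `[1/2,1]`. -/
noncomputable def combReparam (σ₁ σ₂ : ℝ → ℝ) (t : ℝ) : ℝ :=
  if t ≤ 1 / 2 then σ₁ (min (2 * t) 1) / 2 else (σ₂ (max (2 * t - 1) 0) + 1) / 2

lemma combReparam_props {σ₁ σ₂ : ℝ → ℝ}
    (hc₁ : ContinuousOn σ₁ (Set.Icc 0 1)) (hm₁ : MonotoneOn σ₁ (Set.Icc 0 1))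
    (hi₁ : σ₁ '' Set.Icc 0 1 = Set.Icc 0 1)
    (hc₂ : ContinuousOn σ₂ (Set.Icc 0 1)) (hm₂ : MonotoneOn σ₂ (Set.Icc 0 1))
    (hi₂ : σ₂ '' Set.Icc 0 1 = Set.Icc 0 1) :
    ContinuousOn (combReparam σ₁ σ₂) (Set.Icc 0 1) ∧
      MonotoneOn (combReparam σ₁ σ₂) (Set.Icc 0 1) ∧
      combReparam σ₁ σ₂ '' Set.Icc 0 1 = Set.Icc 0 1 := by
  obtain ⟨h10, h11, h1m⟩ := reparam_facts hm₁ hi₁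
  obtain ⟨h20, h21, h2m⟩ := reparam_facts hm₂ hi₂
  set f : ℝ → ℝ := fun t => σ₁ (min (2 * t) 1) / 2 with hf
  set g : ℝ → ℝ := fun t => (σ₂ (max (2 * t - 1) 0) + 1) / 2 with hg
  have hmin_mem : ∀ t ∈ Set.Icc (0:ℝ) 1, min (2 * t) 1 ∈ Set.Icc (0:ℝ) 1 := by
    intro t ht
    constructor
    · exact le_min (by linarith [ht.1]) zero_le_one
    · exact min_le_right _ _
  have hmax_mem : ∀ t ∈ Set.Icc (0:ℝ) 1, max (2 * t - 1) 0 ∈ Set.Icc (0:ℝ) 1 := by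
    intro t ht
    constructor
    · exact le_max_right _ _
    · exact max_le (by linarith [ht.2]) zero_le_one
  have hfc : ContinuousOn f (Set.Icc 0 1) := by
    have : ContinuousOn (fun t : ℝ => σ₁ (min (2 * t) 1)) (Set.Icc 0 1) :=
      hc₁.comp (((continuous_const.mul continuous_id).min continuous_const).continuousOn)
        hmin_mem
    exact this.div_const 2
  have hgc : ContinuousOn g (Set.Icc 0 1) := by
    have : ContinuousOn (fun t : ℝ => σ₂ (max (2 * t - 1) 0)) (Set.Icc 0 1) :=
      hc₂.comp ((((continuous_const.mul continuous_id).sub continuous_const).max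
        continuous_const).continuousOn) hmax_mem
    exact (this.add continuousOn_const).div_const 2
  have hfg : f (1/2 : ℝ) = g (1/2 : ℝ) := by
    have : min (2 * (1/2:ℝ)) 1 = 1 := by norm_num
    have h2 : max (2 * (1/2:ℝ) - 1) 0 = 0 := by norm_num
    simp only [hf, hg, this, h2, h11, h20]
    norm_num
  have hcont : ContinuousOn (combReparam σ₁ σ₂) (Set.Icc 0 1) := by
    have : combReparam σ₁ σ₂ = fun t => if t ≤ 1/2 then f t else g t := rfl
    rw [this]
    apply ContinuousOn.if
    · intro a ha
      have : a ∈ frontier (Set.Iic (1/2:ℝ)) := ha.2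
      rw [frontier_Iic] at this
      rw [Set.mem_singleton_iff] at this
      subst this
      exact hfg
    · exact hfc.mono Set.inter_subset_left
    · exact hgc.mono Set.inter_subset_left
  -- values of f and g
  have hfval : ∀ t ∈ Set.Icc (0:ℝ) 1,
      σ₁ (min (2 * t) 1) / 2 ∈ Set.Icc (0:ℝ) (1/2) := by
    intro t ht
    have := h1m _ (hmin_mem t ht)
    exact ⟨by linarith [this.1], by linarith [this.2]⟩
  have hgval : ∀ t ∈ Set.Icc (0:ℝ) 1,
      (σ₂ (max (2 * t - 1) 0) + 1) / 2 ∈ Set.Icc (1/2:ℝ) 1 := by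
    intro t ht
    have := h2m _ (hmax_mem t ht)
    exact ⟨by linarith [this.1], by linarith [this.2]⟩
  have hmono : MonotoneOn (combReparam σ₁ σ₂) (Set.Icc 0 1) := by
    intro a ha b hb hab
    unfold combReparam
    by_cases ha2 : a ≤ 1/2
    · by_cases hb2 : b ≤ 1/2
      · rw [if_pos ha2, if_pos hb2]
        have h1 : min (2*a) 1 ≤ min (2*b) 1 := by
          apply min_le_min _ le_rfl; linarith
        have := hm₁ (hmin_mem a ha) (hmin_mem b hb) h1
        linarith
      · rw [if_pos ha2, if_neg hb2]
        have hfa := hfval a ha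
        have hgb := hgval b hb
        linarith [hfa.2, hgb.1]
    · have hb2 : ¬ b ≤ 1/2 := fun h => ha2 (hab.trans h)
      rw [if_neg ha2, if_neg hb2]
      have h1 : max (2*a-1) 0 ≤ max (2*b-1) 0 := by
        apply max_le_max _ le_rfl; linarith
      have := hm₂ (hmax_mem a ha) (hmax_mem b hb) h1
      linarith
  refine ⟨hcont, hmono, ?_⟩
  apply Set.Subset.antisymm
  · rintro _ ⟨t, ht, rfl⟩
    unfold combReparam
    by_cases h : t ≤ 1/2
    · rw [if_pos h]
      have := hfval t ht
      exact ⟨this.1, by linarith [this.2]⟩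
    · rw [if_neg h]
      have := hgval t ht
      exact ⟨by linarith [this.1], this.2⟩
  · have h0 : combReparam σ₁ σ₂ 0 = 0 := by
      unfold combReparam
      rw [if_pos (by norm_num : (0:ℝ) ≤ 1/2)]
      have : min (2 * (0:ℝ)) 1 = 0 := by norm_num
      rw [this, h10]; norm_num
    have h1 : combReparam σ₁ σ₂ 1 = 1 := by
      unfold combReparam
      rw [if_neg (by norm_num : ¬ (1:ℝ) ≤ 1/2)]
      have : max (2 * (1:ℝ) - 1) 0 = 1 := by norm_num
      rw [this, h21]; norm_num
    have := intermediate_value_Icc (zero_le_one) hcont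
    rw [h0, h1] at this
    exact this

/-- Evaluation of the concatenated curve along the combined reparametrization. -/
lemma concat_combReparam_eval {d : ℕ} (f g : ℝ → Euc d) (σ₁ σ₂ : ℝ → ℝ)
    (hfg : f 1 = g 0)
    (h1m : ∀ s ∈ Set.Icc (0:ℝ) 1, σ₁ s ∈ Set.Icc (0:ℝ) 1)
    (h2m : ∀ s ∈ Set.Icc (0:ℝ) 1, σ₂ s ∈ Set.Icc (0:ℝ) 1)
    {t : ℝ} (ht : t ∈ Set.Icc (0:ℝ) 1) :
    concatCurve f g (combReparam σ₁ σ₂ t) =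
      if t ≤ 1/2 then f (σ₁ (2 * t)) else g (σ₂ (2 * t - 1)) := by
  by_cases h : t ≤ 1/2
  · rw [if_pos h]
    have hmin' : min (2 * t) 1 = 2 * t := min_eq_left (by linarith [ht.2])
    have hval := h1m (2 * t) ⟨by linarith [ht.1], by linarith⟩
    have hcomb : combReparam σ₁ σ₂ t = σ₁ (2 * t) / 2 := by
      unfold combReparam; rw [if_pos h, hmin']
    rw [hcomb]
    unfold concatCurve
    rw [if_pos (by linarith [hval.2] : σ₁ (2 * t) / 2 ≤ 1/2)]
    have : 2 * (σ₁ (2 * t) / 2) = σ₁ (2 * t) := by ring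
    rw [this]
  · rw [if_neg h]
    have hmax : max (2 * t - 1) 0 = 2 * t - 1 := max_eq_left (by linarith)
    have hval := h2m (2 * t - 1) ⟨by linarith, by linarith [ht.2]⟩
    have hcomb : combReparam σ₁ σ₂ t = (σ₂ (2 * t - 1) + 1) / 2 := by
      unfold combReparam; rw [if_neg h, hmax]
    rw [hcomb]
    unfold concatCurve
    by_cases h' : (σ₂ (2 * t - 1) + 1) / 2 ≤ 1/2
    · rw [if_pos h']
      have hz : σ₂ (2 * t - 1) = 0 := le_antisymm (by linarith) hval.1
      have : (2:ℝ) * ((σ₂ (2 * t - 1) + 1) / 2) = 1 := by rw [hz]; norm_num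
      rw [this, hfg, ← hz]
    · rw [if_neg h']
      have : 2 * ((σ₂ (2 * t - 1) + 1) / 2) - 1 = σ₂ (2 * t - 1) := by ring
      rw [this]

/-- Distances between points on two curves over `[0,1]` are uniformly bounded. -/
lemma dist_curves_bdd {d : ℕ} (P Q : ℝ → Euc d)
    (hP : ContinuousOn P (Set.Icc 0 1)) (hQ : ContinuousOn Q (Set.Icc 0 1)) :
    ∃ C, ∀ x ∈ Set.Icc (0:ℝ) 1, ∀ y ∈ Set.Icc (0:ℝ) 1, dist (P x) (Q y) ≤ C := by
  have hK : IsCompact (P '' Set.Icc 0 1 ∪ Q '' Set.Icc 0 1) :=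
    (isCompact_Icc.image_of_continuousOn hP).union (isCompact_Icc.image_of_continuousOn hQ)
  obtain ⟨C, hC⟩ := Metric.isBounded_iff.mp hK.isBounded
  refine ⟨C, fun x hx y hy => ?_⟩
  exact hC (Set.mem_union_left _ ⟨x, hx, rfl⟩) (Set.mem_union_right _ ⟨y, hy, rfl⟩)

/-- Extraction of a near-optimal reparametrization pair. -/
lemma frechet_extract {d : ℕ} (P Q : ℝ → Euc d) {ε δ : ℝ}
    (h : frechetDist P Q ≤ ε) (hδ : 0 < δ) :
    ∃ σ τ : ℝ → ℝ, IsReparamPair σ τ ∧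
      (⨆ t : Set.Icc (0:ℝ) 1, dist (P (σ t)) (Q (τ t))) < ε + δ := by
  have hne : {r : ℝ | ∃ σ τ : ℝ → ℝ, IsReparamPair σ τ ∧
      r = ⨆ t : Set.Icc (0 : ℝ) 1, dist (P (σ t)) (Q (τ t))}.Nonempty := by
    refine ⟨_, id, id, ⟨continuous_id.continuousOn, monotone_id.monotoneOn _,
      Set.image_id _, continuous_id.continuousOn, monotone_id.monotoneOn _,
      Set.image_id _⟩, rfl⟩
  have hlt : frechetDist P Q < ε + δ := lt_of_le_of_lt h (by linarith)
  obtain ⟨r, ⟨σ, τ, hστ, hr⟩, hrlt⟩ := exists_lt_of_csInf_lt hne hlt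
  exact ⟨σ, τ, hστ, hr ▸ hrlt⟩

/-- Fréchet distance bounds are preserved under concatenation of curves. -/
theorem frechetDist_concat_le {d : ℕ} (P₁ P₂ Q₁ Q₂ : ℝ → Euc d)
    (hP₁ : ContinuousOn P₁ (Set.Icc 0 1)) (hP₂ : ContinuousOn P₂ (Set.Icc 0 1))
    (hQ₁ : ContinuousOn Q₁ (Set.Icc 0 1)) (hQ₂ : ContinuousOn Q₂ (Set.Icc 0 1))
    (hP : P₁ 1 = P₂ 0) (hQ : Q₁ 1 = Q₂ 0) (ε : ℝ) (hε : 0 < ε)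
    (h₁ : frechetDist P₁ Q₁ ≤ ε) (h₂ : frechetDist P₂ Q₂ ≤ ε) :
    frechetDist (concatCurve P₁ P₂) (concatCurve Q₁ Q₂) ≤ ε := by
  haveI : Nonempty (Set.Icc (0:ℝ) 1) :=
    Set.Nonempty.to_subtype (Set.nonempty_Icc.mpr zero_le_one)
  refine le_of_forall_pos_le_add fun δ hδ => ?_
  obtain ⟨σ₁, τ₁, ⟨hc₁, hm₁, hi₁, hc₁', hm₁', hi₁'⟩, hs₁⟩ := frechet_extract P₁ Q₁ h₁ hδ
  obtain ⟨σ₂, τ₂, ⟨hc₂, hm₂, hi₂, hc₂', hm₂', hi₂'⟩, hs₂⟩ := frechet_extract P₂ Q₂ h₂ hδ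
  obtain ⟨hσc, hσm, hσi⟩ := combReparam_props hc₁ hm₁ hi₁ hc₂ hm₂ hi₂
  obtain ⟨hτc, hτm, hτi⟩ := combReparam_props hc₁' hm₁' hi₁' hc₂' hm₂' hi₂'
  obtain ⟨_, _, h1mem⟩ := reparam_facts hm₁ hi₁
  obtain ⟨_, _, h2mem⟩ := reparam_facts hm₂ hi₂
  obtain ⟨_, _, h1mem'⟩ := reparam_facts hm₁' hi₁'
  obtain ⟨_, _, h2mem'⟩ := reparam_facts hm₂' hi₂'
  -- boundedness of the two distance families
  obtain ⟨C₁, hC₁⟩ := dist_curves_bdd P₁ Q₁ hP₁ hQ₁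
  obtain ⟨C₂, hC₂⟩ := dist_curves_bdd P₂ Q₂ hP₂ hQ₂
  have hbdd₁ : BddAbove (Set.range fun t : Set.Icc (0:ℝ) 1 =>
      dist (P₁ (σ₁ t)) (Q₁ (τ₁ t))) := by
    refine ⟨C₁, ?_⟩
    rintro _ ⟨t, rfl⟩
    exact hC₁ _ (h1mem t t.2) _ (h1mem' t t.2)
  have hbdd₂ : BddAbove (Set.range fun t : Set.Icc (0:ℝ) 1 =>
      dist (P₂ (σ₂ t)) (Q₂ (τ₂ t))) := by
    refine ⟨C₂, ?_⟩
    rintro _ ⟨t, rfl⟩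
    exact hC₂ _ (h2mem t t.2) _ (h2mem' t t.2)
  set r₁ := ⨆ t : Set.Icc (0:ℝ) 1, dist (P₁ (σ₁ t)) (Q₁ (τ₁ t)) with hr₁
  set r₂ := ⨆ t : Set.Icc (0:ℝ) 1, dist (P₂ (σ₂ t)) (Q₂ (τ₂ t)) with hr₂
  -- the combined element
  set σ := combReparam σ₁ σ₂ with hσ
  set τ := combReparam τ₁ τ₂ with hτ
  set R := ⨆ t : Set.Icc (0:ℝ) 1,
    dist (concatCurve P₁ P₂ (σ t)) (concatCurve Q₁ Q₂ (τ t)) with hR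
  have hRmem : R ∈ {r : ℝ | ∃ σ' τ' : ℝ → ℝ, IsReparamPair σ' τ' ∧
      r = ⨆ t : Set.Icc (0 : ℝ) 1,
        dist (concatCurve P₁ P₂ (σ' t)) (concatCurve Q₁ Q₂ (τ' t))} :=
    ⟨σ, τ, ⟨hσc, hσm, hσi, hτc, hτm, hτi⟩, rfl⟩
  have hbelow : BddBelow {r : ℝ | ∃ σ' τ' : ℝ → ℝ, IsReparamPair σ' τ' ∧
      r = ⨆ t : Set.Icc (0 : ℝ) 1,
        dist (concatCurve P₁ P₂ (σ' t)) (concatCurve Q₁ Q₂ (τ' t))} := by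
    refine ⟨0, ?_⟩
    rintro r ⟨σ', τ', _, rfl⟩
    exact Real.iSup_nonneg fun _ => dist_nonneg
  have hle : frechetDist (concatCurve P₁ P₂) (concatCurve Q₁ Q₂) ≤ R :=
    csInf_le hbelow hRmem
  have hRle : R ≤ max r₁ r₂ := by
    apply ciSup_le
    intro t
    have ht : (t : ℝ) ∈ Set.Icc (0:ℝ) 1 := t.2
    rw [hσ, hτ, concat_combReparam_eval P₁ P₂ σ₁ σ₂ hP h1mem h2mem ht,
      concat_combReparam_eval Q₁ Q₂ τ₁ τ₂ hQ h1mem' h2mem' ht]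
    by_cases h : (t : ℝ) ≤ 1/2
    · rw [if_pos h, if_pos h]
      have h2t : (2 * (t:ℝ)) ∈ Set.Icc (0:ℝ) 1 := ⟨by linarith [ht.1], by linarith⟩
      have := le_ciSup hbdd₁ (⟨2 * (t:ℝ), h2t⟩ : Set.Icc (0:ℝ) 1)
      exact le_trans this (le_max_left _ _)
    · rw [if_neg h, if_neg h]
      have h2t : (2 * (t:ℝ) - 1) ∈ Set.Icc (0:ℝ) 1 := ⟨by linarith, by linarith [ht.2]⟩
      have := le_ciSup hbdd₂ (⟨2 * (t:ℝ) - 1, h2t⟩ : Set.Icc (0:ℝ) 1)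
      exact le_trans this (le_max_right _ _)
  calc frechetDist (concatCurve P₁ P₂) (concatCurve Q₁ Q₂) ≤ R := hle
    _ ≤ max r₁ r₂ := hRle
    _ ≤ ε + δ := max_le hs₁.le hs₂.le

end
end

section
/- Let a, b ∈ ℝ^d, ε > 0, and let t_1 ≤ t_2 ≤ … ≤ t_m be real numbers in [0,1] (m ≥ 2). Let v_1, …, v_m ∈ ℝ^d be points such that dist(v_j, (1−t_j)·a + t_j·b) ≤ ε for every j. Then the Fréchet distance between the polygonal curve with vertices v_1, …, v_m and the segment from (1−t_1)·a + t_1·b to (1−t_m)·a + t_m·b is at most ε. -/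
open Set Metric

noncomputable section

/-!
Interpolate the parameters `t j` piecewise linearly to a scalar polyline `T`; it is continuous
and nondecreasing from `t 0` to `t (m-1)`, so after normalisation it reparametrizes the segment.
Polylines commute with affine maps, so at time `T u` the segment sits at the point of the
polyline through `(1 - t j) • a + t j • b` at time `u`. That polyline and the one through the
`v j` run along corresponding edges with the same barycentric parameter, and closed balls are
convex, so the two stay within `ε` of each other.
-/

open AffineMap

def IsReparam (σ : ℝ → ℝ) : Prop :=
  ContinuousOn σ (Icc 0 1) ∧ MonotoneOn σ (Icc 0 1) ∧ σ '' Icc 0 1 = Icc 0 1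

lemma isReparam_id : IsReparam id :=
  ⟨continuousOn_id, monotoneOn_id, image_id _⟩

lemma IsReparam.of_map_zero_of_map_one {σ : ℝ → ℝ} (hc : ContinuousOn σ (Icc 0 1))
    (hm : MonotoneOn σ (Icc 0 1)) (h₀ : σ 0 = 0) (h₁ : σ 1 = 1) : IsReparam σ :=
  ⟨hc, hm, by rw [hc.image_Icc_of_monotoneOn zero_le_one hm, h₀, h₁]⟩

lemma IsReparam.isReparamPair {σ τ : ℝ → ℝ} (hσ : IsReparam σ) (hτ : IsReparam τ) :
    IsReparamPair σ τ :=
  ⟨hσ.1, hσ.2.1, hσ.2.2, hτ.1, hτ.2.1, hτ.2.2⟩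

lemma frechetDist_le_of_forall_dist_le {d : ℕ} {P Q : ℝ → Euc d} {σ τ : ℝ → ℝ} {ε : ℝ}
    (hστ : IsReparamPair σ τ) (h : ∀ u ∈ Icc (0 : ℝ) 1, dist (P (σ u)) (Q (τ u)) ≤ ε) :
    frechetDist P Q ≤ ε := by
  have : Nonempty (Icc (0 : ℝ) 1) := (nonempty_Icc.2 zero_le_one).to_subtype
  have hbdd : BddBelow {r : ℝ | ∃ σ τ : ℝ → ℝ, IsReparamPair σ τ ∧
      r = ⨆ t : Icc (0 : ℝ) 1, dist (P (σ t)) (Q (τ t))} := by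
    refine ⟨0, ?_⟩
    rintro _ ⟨-, -, -, rfl⟩
    exact Real.iSup_nonneg fun _ => dist_nonneg
  exact (csInf_le hbdd ⟨σ, τ, hστ, rfl⟩).trans (ciSup_le fun u => h u u.2)

lemma exists_isReparam_lineMap_eq {T : ℝ → ℝ} (hc : ContinuousOn T (Icc 0 1))
    (hm : MonotoneOn T (Icc 0 1)) :
    ∃ τ, IsReparam τ ∧ ∀ u ∈ Icc (0 : ℝ) 1, lineMap (T 0) (T 1) (τ u) = T u := by
  have h₀ : (0 : ℝ) ∈ Icc 0 1 := left_mem_Icc.2 zero_le_one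
  have h₁ : (1 : ℝ) ∈ Icc 0 1 := right_mem_Icc.2 zero_le_one
  rcases (hm h₀ h₁ zero_le_one).eq_or_lt with heq | hlt
  · refine ⟨id, isReparam_id, fun u hu => ?_⟩
    -- `T` is constant on `[0, 1]`, so the segment `[T 0, T 1]` is a point
    have hTu : T u = T 0 := le_antisymm (heq ▸ hm hu h₁ hu.2) (hm h₀ hu hu.1)
    rw [hTu, ← heq, lineMap_same_apply]
  · have hne : T 1 - T 0 ≠ 0 := sub_ne_zero.2 hlt.ne'
    refine ⟨fun u => (T u - T 0) / (T 1 - T 0), .of_map_zero_of_map_one ?_ ?_ ?_ ?_, ?_⟩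
    · exact (hc.sub continuousOn_const).div_const _
    · intro x hx y hy hxy
      dsimp only
      gcongr
      exact hm hx hy hxy
    · simp
    · exact div_self hne
    · intro u _
      rw [lineMap_apply_ring', div_mul_cancel₀ _ hne, sub_add_cancel]

def polylineIndex (n : ℕ) (u : ℝ) : ℕ := min ⌊u * n⌋₊ (n - 1)

section polylineIndex

variable {n : ℕ} {u : ℝ}

lemma polylineIndex_add_one_le (hn : 1 ≤ n) : polylineIndex n u + 1 ≤ n := by
  unfold polylineIndex; omega

lemma polylineIndex_le_mul (hu : 0 ≤ u) : (polylineIndex n u : ℝ) ≤ u * n :=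
  (Nat.cast_le.2 (min_le_left _ _)).trans (Nat.floor_le (by positivity))

lemma mul_sub_polylineIndex_le_one (hn : 1 ≤ n) (hu : u ≤ 1) :
    u * n - polylineIndex n u ≤ 1 := by
  unfold polylineIndex
  rcases le_total ⌊u * n⌋₊ (n - 1) with h | h
  · rw [min_eq_left h]
    linarith [Nat.lt_floor_add_one (u * n)]
  · rw [min_eq_right h, Nat.cast_sub hn, Nat.cast_one]
    nlinarith [(Nat.one_le_cast (α := ℝ)).2 hn]

end polylineIndex

section Polyline

variable {E F : Type*} [AddCommGroup E] [Module ℝ E] [AddCommGroup F] [Module ℝ F]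

def polyline (q : ℕ → E) (n : ℕ) (u : ℝ) : E :=
  lineMap (q (polylineIndex n u)) (q (polylineIndex n u + 1)) (u * n - polylineIndex n u)

lemma polyline_zero (q : ℕ → E) (n : ℕ) : polyline q n 0 = q 0 := by
  simp [polyline, polylineIndex]

lemma AffineMap.apply_polyline (f : E →ᵃ[ℝ] F) (q : ℕ → E) (n : ℕ) (u : ℝ) :
    f (polyline q n u) = polyline (fun j => f (q j)) n u :=
  f.apply_lineMap _ _ _

lemma polyline_eq_add_sum {n : ℕ} (hn : 1 ≤ n) (q : ℕ → E) {u : ℝ}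
    (hu : u ∈ Icc (0 : ℝ) 1) :
    polyline q n u =
      q 0 + ∑ j ∈ Finset.range n, min 1 (max 0 (u * n - j)) • (q (j + 1) - q j) := by
  set i := polylineIndex n u
  have hi : i + 1 ≤ n := polylineIndex_add_one_le hn
  have hi₀ : (i : ℝ) ≤ u * n := polylineIndex_le_mul hu.1
  have hi₁ : u * n - i ≤ 1 := mul_sub_polylineIndex_le_one hn hu.2
  have before : ∀ j ∈ Finset.range i,
      min 1 (max 0 (u * n - j)) • (q (j + 1) - q j) = q (j + 1) - q j := by
    intro j hj
    have : (j : ℝ) + 1 ≤ i := by exact_mod_cast Finset.mem_range.1 hj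
    rw [max_eq_right (by linarith), min_eq_left (by linarith), one_smul]
  have after : ∀ j ∈ Finset.Ico (i + 1) n,
      min 1 (max 0 (u * n - j)) • (q (j + 1) - q j) = 0 := by
    intro j hj
    have : (i : ℝ) + 1 ≤ j := by exact_mod_cast (Finset.mem_Ico.1 hj).1
    rw [max_eq_left (by linarith), min_eq_right zero_le_one, zero_smul]
  rw [← Finset.sum_range_add_sum_Ico _ hi, Finset.sum_eq_zero after, add_zero,
    Finset.sum_range_succ, Finset.sum_congr rfl before, Finset.sum_range_sub,
    max_eq_right (by linarith), min_eq_right hi₁, polyline, lineMap_apply_module']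
  abel

lemma polyline_one {n : ℕ} (hn : 1 ≤ n) (q : ℕ → E) : polyline q n 1 = q n := by
  have hclamp : ∀ j ∈ Finset.range n, min 1 (max 0 (1 * (n : ℝ) - j)) • (q (j + 1) - q j)
      = q (j + 1) - q j := by
    intro j hj
    have : (j : ℝ) + 1 ≤ n := by exact_mod_cast Finset.mem_range.1 hj
    rw [max_eq_right (by linarith), min_eq_left (by linarith), one_smul]
  rw [polyline_eq_add_sum hn q (right_mem_Icc.2 zero_le_one), Finset.sum_congr rfl hclamp,
    Finset.sum_range_sub, add_sub_cancel]

lemma continuousOn_polyline [TopologicalSpace E] [IsTopologicalAddGroup E]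
    [ContinuousSMul ℝ E] {n : ℕ} (hn : 1 ≤ n) (q : ℕ → E) : ContinuousOn (polyline q n) (Icc 0 1) :=
  ContinuousOn.congr (by fun_prop) fun _ hu => polyline_eq_add_sum hn q hu

lemma monotoneOn_polyline {n : ℕ} (hn : 1 ≤ n) {t : ℕ → ℝ}
    (ht : ∀ j, j + 1 ≤ n → t j ≤ t (j + 1)) :
    MonotoneOn (polyline t n) (Icc 0 1) := by
  intro x hx y hy hxy
  rw [polyline_eq_add_sum hn t hx, polyline_eq_add_sum hn t hy]
  gcongr with j hj
  exact sub_nonneg.2 (ht j (Finset.mem_range.1 hj))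

end Polyline

lemma dist_lineMap_lineMap_le {E : Type*} [NormedAddCommGroup E] [NormedSpace ℝ E]
    {p₀ p₁ p₀' p₁' : E} {c ε : ℝ} (hc : c ∈ Icc (0 : ℝ) 1) (h₀ : dist p₀ p₀' ≤ ε)
    (h₁ : dist p₁ p₁' ≤ ε) : dist (lineMap p₀ p₁ c) (lineMap p₀' p₁' c) ≤ ε := by
  rw [dist_eq_norm_vsub E, lineMap_vsub_lineMap, ← mem_closedBall_zero_iff]
  rw [dist_eq_norm_vsub E, ← mem_closedBall_zero_iff] at h₀ h₁
  exact (convex_closedBall 0 ε).lineMap_mem h₀ h₁ hc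

lemma dist_polyline_le {E : Type*} [NormedAddCommGroup E] [NormedSpace ℝ E] {n : ℕ}
    (hn : 1 ≤ n) {q q' : ℕ → E} {ε : ℝ} (h : ∀ j ≤ n, dist (q j) (q' j) ≤ ε) {u : ℝ}
    (hu : u ∈ Icc (0 : ℝ) 1) :
    dist (polyline q n u) (polyline q' n u) ≤ ε :=
  have hi := polylineIndex_add_one_le (u := u) hn
  dist_lineMap_lineMap_le ⟨sub_nonneg.2 (polylineIndex_le_mul hu.1),
    mul_sub_polylineIndex_le_one hn hu.2⟩ (h _ (by omega)) (h _ hi)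

lemma polyCurve_eq_polyline {d : ℕ} (q : ℕ → Euc d) (n : ℕ) : polyCurve q n = polyline q n := by
  ext1 u
  simp only [polyCurve, polyline, polylineIndex, lineMap_apply_module, Int.floor_toNat]

lemma segCurve_eq_lineMap {d : ℕ} (a b : Euc d) : segCurve a b = lineMap a b := by
  ext1 s
  rw [segCurve, lineMap_apply_module]

theorem frechetDist_polyCurve_near_segment_le_general {d m : ℕ} (hm : 2 ≤ m)
    (a b : Euc d) (ε : ℝ) (t : ℕ → ℝ) (v : ℕ → Euc d)
    (hmono : ∀ j, j + 1 ≤ m - 1 → t j ≤ t (j + 1))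
    (hdist : ∀ j ≤ m - 1, dist (v j) ((1 - t j) • a + t j • b) ≤ ε) :
    frechetDist (polyCurve v (m - 1))
      (segCurve ((1 - t 0) • a + t 0 • b) ((1 - t (m - 1)) • a + t (m - 1) • b)) ≤ ε := by
  set n := m - 1
  have hn : 1 ≤ n := by omega
  obtain ⟨τ, hτ, hτT⟩ :=
    exists_isReparam_lineMap_eq (continuousOn_polyline hn t) (monotoneOn_polyline hn hmono)
  rw [polyline_zero, polyline_one hn] at hτT
  refine frechetDist_le_of_forall_dist_le (isReparam_id.isReparamPair hτ) fun u hu => ?_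
  simp only [← lineMap_apply_module] at hdist ⊢
  rw [polyCurve_eq_polyline, segCurve_eq_lineMap, id_eq, ← (lineMap a b).apply_lineMap, hτT u hu,
    AffineMap.apply_polyline]
  exact dist_polyline_le hn hdist hu

/-- If `v 0, …, v (m-1)` are points within `ε` of the points at parameters
`t 0 ≤ t 1 ≤ … ≤ t (m-1)` of the segment from `a` to `b`, then the polygonal curve on
the `v j` has Fréchet distance at most `ε` from the segment between the first and last
of these parameter points. -/
theorem frechetDist_polyCurve_near_segment_le {d m : ℕ} (hm : 2 ≤ m)
    (a b : Euc d) (ε : ℝ) (hε : 0 < ε) (t : ℕ → ℝ) (v : ℕ → Euc d)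
    (hmono : ∀ j, j + 1 ≤ m - 1 → t j ≤ t (j + 1))
    (hmem : ∀ j ≤ m - 1, t j ∈ Set.Icc (0 : ℝ) 1)
    (hdist : ∀ j ≤ m - 1, dist (v j) ((1 - t j) • a + t j • b) ≤ ε) :
    frechetDist (polyCurve v (m - 1))
      (segCurve ((1 - t 0) • a + t 0 • b) ((1 - t (m - 1)) • a + t (m - 1) • b)) ≤ ε :=
  frechetDist_polyCurve_near_segment_le_general hm a b ε t v hmono hdist
end
end

section
/- For any continuous curves P, Q : [0,1] → ℝ^d, the infimum in the definition of the Fréchet distance is attained: there exist continuous nondecreasing surjections σ, τ : [0,1] → [0,1] such that sup_{t ∈ [0,1]} dist(P(σ(t)), Q(τ(t))) = δ_F(P, Q). In particular, if δ_F(P, Q) ≤ ε then there exist such σ, τ with sup_{t ∈ [0,1]} dist(P(σ(t)), Q(τ(t))) ≤ ε. -/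
open Set Metric

noncomputable section

/-!
A pair `(σ, τ)` can be traded for a *balanced* pair, with `σ t + τ t = 2 t`, that visits the same
pairs of points and so costs no more: reparametrize by the average `(σ + τ) / 2`, on whose level
sets `σ` and `τ` are constant. Balanced pairs are `2`-Lipschitz and form a closed, hence compact,
subset of `(I → I) × (I → I)` in the topology of pointwise convergence. The cost, a supremum of
pointwise-continuous functions, is lower semicontinuous there, so it attains its minimum, and
that minimum is the Fréchet distance.
-/

open Bornology
open unitInterval (zero_mem one_mem nonneg le_one)

local notation "I" => unitInterval

lemma MonotoneOn.le_of_add_le_add {α β : Type*} [LinearOrder α] [AddCommMonoid β]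
    [LinearOrder β] [IsOrderedCancelAddMonoid β] {s : Set α} {f g : α → β}
    (hf : MonotoneOn f s) (hg : MonotoneOn g s) {a b : α} (ha : a ∈ s) (hb : b ∈ s)
    (h : f a + g a ≤ f b + g b) : f a ≤ f b := by
  rcases le_total a b with hab | hba
  · exact hf ha hb hab
  · by_contra! hlt
    exact (add_lt_add_of_lt_of_le hlt (hg hb ha hba)).not_ge h

namespace Frechet

def IsReparam (σ : ℝ → ℝ) : Prop :=
  ContinuousOn σ I ∧ MonotoneOn σ I ∧ σ '' I = I

lemma isReparamPair_iff {σ τ : ℝ → ℝ} : IsReparamPair σ τ ↔ IsReparam σ ∧ IsReparam τ := by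
  simp only [IsReparamPair, IsReparam, and_assoc]

lemma IsReparam.mapsTo {σ : ℝ → ℝ} (h : IsReparam σ) : MapsTo σ I I :=
  fun _ ht => h.2.2 ▸ mem_image_of_mem σ ht

lemma IsReparam.map_zero_one {σ : ℝ → ℝ} (h : IsReparam σ) : σ 0 = 0 ∧ σ 1 = 1 := by
  have hsub := h.2.1.image_Icc_subset
  rw [h.2.2, Icc_subset_Icc_iff zero_le_one] at hsub
  exact ⟨le_antisymm hsub.1 (h.mapsTo zero_mem).1, le_antisymm (h.mapsTo one_mem).2 hsub.2⟩

lemma isReparam_IccExtend {f : I → I} (hc : Continuous f) (hm : Monotone f) (h0 : f 0 = 0)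
    (h1 : f 1 = 1) : IsReparam (IccExtend zero_le_one fun t => (f t : ℝ)) := by
  have hc' : Continuous (IccExtend zero_le_one fun t => (f t : ℝ)) :=
    continuous_IccExtend_iff.2 (continuous_subtype_val.comp hc)
  have hm' : Monotone (IccExtend zero_le_one fun t => (f t : ℝ)) :=
    Monotone.IccExtend _ fun _ _ h => hm h
  refine ⟨hc'.continuousOn, hm'.monotoneOn _, ?_⟩
  rw [hc'.continuousOn.image_Icc_of_monotoneOn zero_le_one (hm'.monotoneOn _),
    IccExtend_of_mem _ _ zero_mem, IccExtend_of_mem _ _ one_mem]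
  exact congrArg₂ Icc (congrArg Subtype.val h0) (congrArg Subtype.val h1)

section Balanced

def balancedPairs : Set ((I → I) × (I → I)) :=
  {p | Monotone p.1 ∧ Monotone p.2 ∧ ∀ t, (p.1 t : ℝ) + p.2 t = 2 * t}

lemma balancedPairs_nonempty : balancedPairs.Nonempty :=
  ⟨(id, id), monotone_id, monotone_id, fun _ => (two_mul _).symm⟩

lemma isCompact_balancedPairs : IsCompact balancedPairs := by
  have hsum : IsClosed {p : (I → I) × (I → I) | ∀ t, (p.1 t : ℝ) + p.2 t = 2 * t} := by
    simp only [ofPred_forall]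
    exact isClosed_iInter fun t => isClosed_eq (by fun_prop) continuous_const
  exact IsClosed.isCompact ((isClosed_monotone.preimage continuous_fst).inter
    ((isClosed_monotone.preimage continuous_snd).inter hsum))

variable {p : (I → I) × (I → I)}

lemma swap_mem_balancedPairs (hp : p ∈ balancedPairs) : p.swap ∈ balancedPairs :=
  ⟨hp.2.1, hp.1, fun t => (add_comm _ _).trans (hp.2.2 t)⟩

lemma fst_zero_of_mem_balancedPairs (hp : p ∈ balancedPairs) : p.1 0 = 0 := by
  have hsum : (p.1 0 : ℝ) + p.2 0 = 0 := by simpa using hp.2.2 0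
  exact Subtype.ext (show (p.1 0 : ℝ) = 0 by linarith [nonneg (p.1 0), nonneg (p.2 0)])

lemma fst_one_of_mem_balancedPairs (hp : p ∈ balancedPairs) : p.1 1 = 1 := by
  have hsum : (p.1 1 : ℝ) + p.2 1 = 2 := by simpa using hp.2.2 1
  exact Subtype.ext (show (p.1 1 : ℝ) = 1 by linarith [le_one (p.1 1), le_one (p.2 1)])

lemma lipschitzWith_fst_of_mem_balancedPairs (hp : p ∈ balancedPairs) :
    LipschitzWith 2 fun t => (p.1 t : ℝ) := by
  refine LipschitzWith.of_le_add_mul 2 fun s t => ?_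
  rw [Subtype.dist_eq, Real.dist_eq]
  push_cast
  rcases le_total s t with hst | hts
  · linarith [show (p.1 s : ℝ) ≤ p.1 t from hp.1 hst, abs_nonneg ((s : ℝ) - t)]
  · linarith [show (p.2 t : ℝ) ≤ p.2 s from hp.2.1 hts, le_abs_self ((s : ℝ) - t),
      hp.2.2 s, hp.2.2 t]

lemma isReparam_IccExtend_fst (hp : p ∈ balancedPairs) :
    IsReparam (IccExtend zero_le_one fun t => (p.1 t : ℝ)) :=
  isReparam_IccExtend
    (continuous_induced_rng.2 (lipschitzWith_fst_of_mem_balancedPairs hp).continuous) hp.1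
    (fst_zero_of_mem_balancedPairs hp) (fst_one_of_mem_balancedPairs hp)

lemma isReparamPair_IccExtend (hp : p ∈ balancedPairs) :
    IsReparamPair (IccExtend zero_le_one fun t => (p.1 t : ℝ))
      (IccExtend zero_le_one fun t => (p.2 t : ℝ)) :=
  isReparamPair_iff.2 ⟨isReparam_IccExtend_fst hp,
    isReparam_IccExtend_fst (swap_mem_balancedPairs hp)⟩

lemma exists_mem_balancedPairs_of_isReparamPair {σ τ : ℝ → ℝ} (h : IsReparamPair σ τ) :
    ∃ p ∈ balancedPairs, ∀ u, ∃ t ∈ I, (p.1 u : ℝ) = σ t ∧ (p.2 u : ℝ) = τ t := by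
  obtain ⟨hσ, hτ⟩ := isReparamPair_iff.1 h
  have hivt := intermediate_value_Icc zero_le_one (hσ.1.add hτ.1)
  simp only [Pi.add_apply, hσ.map_zero_one, hτ.map_zero_one, add_zero] at hivt
  choose t htI ht using fun u : I =>
    hivt (show 2 * (u : ℝ) ∈ Icc 0 (1 + 1) from ⟨by linarith [nonneg u], by linarith [le_one u]⟩)
  beta_reduce at ht
  refine ⟨(fun u => ⟨σ (t u), hσ.mapsTo (htI u)⟩, fun u => ⟨τ (t u), hτ.mapsTo (htI u)⟩),
    ⟨fun u v huv => ?_, fun u v huv => ?_, ht⟩, fun u => ⟨t u, htI u, rfl, rfl⟩⟩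
  · have : σ (t u) + τ (t u) ≤ σ (t v) + τ (t v) := by rw [ht, ht]; gcongr
    exact hσ.2.1.le_of_add_le_add hτ.2.1 (htI u) (htI v) this
  · have : τ (t u) + σ (t u) ≤ τ (t v) + σ (t v) := by
      rw [add_comm, ht, add_comm, ht]; gcongr
    exact hτ.2.1.le_of_add_le_add hσ.2.1 (htI u) (htI v) this

end Balanced

section Cost

variable {X : Type*} [PseudoMetricSpace X] {P Q : ℝ → X}

lemma bddAbove_range_dist {ι : Type*} {s : Set X} (hs : IsBounded s) {f g : ι → X}
    (hf : ∀ i, f i ∈ s) (hg : ∀ i, g i ∈ s) : BddAbove (range fun i => dist (f i) (g i)) := by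
  obtain ⟨C, hC⟩ := isBounded_iff.1 hs
  exact ⟨C, by rintro _ ⟨i, rfl⟩; exact hC (hf i) (hg i)⟩

lemma isBounded_image_union_image (hP : ContinuousOn P I) (hQ : ContinuousOn Q I) :
    IsBounded (P '' I ∪ Q '' I) :=
  (isCompact_Icc.image_of_continuousOn hP).isBounded.union
    (isCompact_Icc.image_of_continuousOn hQ).isBounded

def pairCost (P Q : ℝ → X) (p : (I → I) × (I → I)) : ℝ :=
  ⨆ t, dist (P (p.1 t)) (Q (p.2 t))

lemma iSup_dist_IccExtend (P Q : ℝ → X) (p : (I → I) × (I → I)) :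
    (⨆ t : I, dist (P (IccExtend zero_le_one (fun s => (p.1 s : ℝ)) t))
      (Q (IccExtend zero_le_one (fun s => (p.2 s : ℝ)) t))) = pairCost P Q p := by
  simp only [IccExtend_val, pairCost]

lemma lowerSemicontinuous_pairCost (hP : ContinuousOn P I) (hQ : ContinuousOn Q I) :
    LowerSemicontinuous (pairCost P Q) := by
  refine lowerSemicontinuous_ciSup (fun p => bddAbove_range_dist (isBounded_image_union_image hP hQ)
    (fun t => Or.inl (mem_image_of_mem P (p.1 t).2))
    (fun t => Or.inr (mem_image_of_mem Q (p.2 t).2))) fun t => Continuous.lowerSemicontinuous ?_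
  exact (hP.domRestrict.comp ((continuous_apply t).comp continuous_fst)).dist
    (hQ.domRestrict.comp ((continuous_apply t).comp continuous_snd))

lemma exists_isMinOn_pairCost (hP : ContinuousOn P I) (hQ : ContinuousOn Q I) :
    ∃ p ∈ balancedPairs, IsMinOn (pairCost P Q) balancedPairs p :=
  (lowerSemicontinuous_pairCost hP hQ).lowerSemicontinuousOn _ |>.exists_isMinOn
    balancedPairs_nonempty isCompact_balancedPairs

def reparamCosts (P Q : ℝ → X) : Set ℝ :=
  {r | ∃ σ τ : ℝ → ℝ, IsReparamPair σ τ ∧ r = ⨆ t : I, dist (P (σ t)) (Q (τ t))}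

lemma pairCost_le_of_isReparamPair (hP : ContinuousOn P I) (hQ : ContinuousOn Q I)
    {σ τ : ℝ → ℝ} (h : IsReparamPair σ τ) :
    ∃ p ∈ balancedPairs, pairCost P Q p ≤ ⨆ t : I, dist (P (σ t)) (Q (τ t)) := by
  obtain ⟨p, hp, hpστ⟩ := exists_mem_balancedPairs_of_isReparamPair h
  obtain ⟨hσ, hτ⟩ := isReparamPair_iff.1 h
  have hbdd := bddAbove_range_dist (isBounded_image_union_image hP hQ)
    (fun t : I => Or.inl (mem_image_of_mem P (hσ.mapsTo t.2)))
    (fun t : I => Or.inr (mem_image_of_mem Q (hτ.mapsTo t.2)))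
  refine ⟨p, hp, ciSup_le fun u => ?_⟩
  obtain ⟨t, ht, hσt, hτt⟩ := hpστ u
  exact le_ciSup_of_le hbdd ⟨t, ht⟩ (by rw [hσt, hτt])

lemma exists_isLeast_reparamCosts (hP : ContinuousOn P I) (hQ : ContinuousOn Q I) :
    ∃ σ τ : ℝ → ℝ, IsReparamPair σ τ ∧
      IsLeast (reparamCosts P Q) (⨆ t : I, dist (P (σ t)) (Q (τ t))) := by
  obtain ⟨p, hp, hmin⟩ := exists_isMinOn_pairCost hP hQ
  refine ⟨_, _, isReparamPair_IccExtend hp, ⟨⟨_, _, isReparamPair_IccExtend hp, rfl⟩, ?_⟩⟩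
  rintro _ ⟨σ, τ, hστ, rfl⟩
  obtain ⟨q, hq, hle⟩ := pairCost_le_of_isReparamPair hP hQ hστ
  rw [iSup_dist_IccExtend]
  exact (hmin hq).trans hle

end Cost

end Frechet

open Frechet in
/-- The infimum defining the Fréchet distance of two continuous curves is attained. -/
theorem frechetDist_attained {d : ℕ} (P Q : ℝ → Euc d)
    (hP : ContinuousOn P (Set.Icc 0 1)) (hQ : ContinuousOn Q (Set.Icc 0 1)) :
    (∃ σ τ : ℝ → ℝ, IsReparamPair σ τ ∧
      (⨆ t : Set.Icc (0 : ℝ) 1, dist (P (σ t)) (Q (τ t))) = frechetDist P Q) ∧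
    ∀ ε : ℝ, frechetDist P Q ≤ ε → ∃ σ τ : ℝ → ℝ, IsReparamPair σ τ ∧
      (⨆ t : Set.Icc (0 : ℝ) 1, dist (P (σ t)) (Q (τ t))) ≤ ε := by
  obtain ⟨σ, τ, hστ, hleast⟩ := exists_isLeast_reparamCosts hP hQ
  have hdist : (⨆ t : Set.Icc (0 : ℝ) 1, dist (P (σ t)) (Q (τ t))) = frechetDist P Q :=
    hleast.csInf_eq.symm
  exact ⟨⟨σ, τ, hστ, hdist⟩, fun ε hε => ⟨σ, τ, hστ, hdist.le.trans hε⟩⟩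
end
end
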